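/- arXiv:2511.06121 — 4 statements merged into one kernel-verified Lean document; each statement's English description precedes it below -/
import Mathlib

section
/- Let ρ, a : ℝ³ → ℝ be twice continuously differentiable. Then for every point x ∈ ℝ³ and every fixed index i₁ ∈ {1,2,3}, the sum over all indices i₂,i₃,j₁,j₂,j₃,k₁,k₂,k₃ ∈ {1,2,3} of ε^{i₁i₂i₃}·ε^{j₁j₂j₃}·ε^{k₁k₂k₃}·ρ(x)²·ρ_{i₂j₁}(x)·a_{i₃k₁}(x)·a_{j₃k₂}(x)·a_{j₂k₃}(x) equals 0. (Equivalently, the 1-vector field on ℝ³ encoded by the vanishing sunflower micro-graph with encoding (0,1,4; 1,6,5; 4,5,6), built of three copies of the 3D Nambu–Poisson bracket ρ·det(∂(f,g,a)/∂x), is identically zero.) -/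
noncomputable section

/-- The totally antisymmetric Levi-Civita symbol on `d` indices:
`levicivita m` is the sign of the permutation `(m 0, …, m (d-1))` when the indices
are pairwise distinct (so `levicivita id = 1`), and `0` otherwise. -/
def levicivita {d : ℕ} (m : Fin d → Fin d) : ℝ :=
  Matrix.det (Matrix.of fun p q => if m p = q then (1 : ℝ) else 0)

/-- Partial derivative `∂f/∂x^i` at `x`. -/
def pd {d : ℕ} (f : (Fin d → ℝ) → ℝ) (i : Fin d) (x : Fin d → ℝ) : ℝ :=
  fderiv ℝ f x (Pi.single i 1)

/-- Second partial derivative `f_{pq} = ∂²f/∂x^p∂x^q` at `x`. -/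
def pd2 {d : ℕ} (f : (Fin d → ℝ) → ℝ) (p q : Fin d) (x : Fin d → ℝ) : ℝ :=
  pd (pd f q) p x

/-! Contracting the `k` indices turns the three rows of the Hessian of `a` into
`ε^{i₃ j₃ j₂} · det (∂²a)`. The identity `∑ ε^{j₁ j₂ j₃} ε^{i j₂ j₃} = 2 δ^{j₁ i}` then collapses
the `j` indices, leaving a multiple of `∑ ε^{i₁ i₂ i₃} ρ_{i₂ i₃}`, which vanishes because the
Hessian of `ρ` is symmetric. -/

open Finset Matrix

theorem det_submatrix_eq_levicivita_mul {d : ℕ} (m : Fin d → Fin d)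
    (A : Matrix (Fin d) (Fin d) ℝ) :
    (A.submatrix m id).det = levicivita m * A.det := by
  rw [levicivita, ← det_mul]
  congr 1
  ext p q
  simp [mul_apply]

theorem levicivita_comp_perm {d : ℕ} (m : Fin d → Fin d) (σ : Equiv.Perm (Fin d)) :
    levicivita (m ∘ σ) = Equiv.Perm.sign σ * levicivita m :=
  det_permute σ (of fun p q => if m p = q then (1 : ℝ) else 0)

theorem levicivita_swap_two_three (i j k : Fin 3) :
    levicivita ![i, k, j] = -levicivita ![i, j, k] := by
  have h : ![i, k, j] = ![i, j, k] ∘ Equiv.swap 1 2 := by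
    ext l; fin_cases l <;> rfl
  rw [h, levicivita_comp_perm, Equiv.Perm.sign_swap (by decide)]
  simp

theorem sum_levicivita_mul_fin_three (u v w : Fin 3 → ℝ) :
    ∑ k₁, ∑ k₂, ∑ k₃, levicivita ![k₁, k₂, k₃] * u k₁ * v k₂ * w k₃ = (of ![u, v, w]).det := by
  simp [Fin.sum_univ_three, levicivita, det_fin_three]
  ring

theorem sum_levicivita_mul_rows (A : Matrix (Fin 3) (Fin 3) ℝ) (p q r : Fin 3) :
    ∑ k₁, ∑ k₂, ∑ k₃, levicivita ![k₁, k₂, k₃] * A p k₁ * A q k₂ * A r k₃ =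
      levicivita ![p, q, r] * A.det := by
  rw [sum_levicivita_mul_fin_three, ← det_submatrix_eq_levicivita_mul]
  congr 1
  ext l k; fin_cases l <;> rfl

theorem sum_levicivita_mul_levicivita (i j : Fin 3) :
    ∑ k, ∑ l, levicivita ![i, k, l] * levicivita ![j, k, l] = if i = j then 2 else 0 := by
  fin_cases i <;> fin_cases j <;> simp [Fin.sum_univ_three, levicivita, det_fin_three] <;> norm_num

theorem sum_levicivita_mul_of_isSymm (R : Matrix (Fin 3) (Fin 3) ℝ) (hR : R.IsSymm) (i : Fin 3) :
    ∑ j, ∑ k, levicivita ![i, j, k] * R j k = 0 := by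
  have h : ∑ j, ∑ k, levicivita ![i, j, k] * R j k = -∑ j, ∑ k, levicivita ![i, j, k] * R j k :=
    calc ∑ j, ∑ k, levicivita ![i, j, k] * R j k
        = ∑ j, ∑ k, levicivita ![i, k, j] * R k j := sum_comm
      _ = -∑ j, ∑ k, levicivita ![i, j, k] * R j k := by
        simp only [← sum_neg_distrib]
        refine sum_congr rfl fun j _ => sum_congr rfl fun k _ => ?_
        rw [levicivita_swap_two_three, hR.apply, neg_mul]
  linarith

theorem sunflower_contraction_eq_zero_of_isSymm (R A : Matrix (Fin 3) (Fin 3) ℝ) (hR : R.IsSymm)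
    (c : ℝ) (i₁ : Fin 3) :
    ∑ i₂, ∑ i₃, ∑ j₁, ∑ j₂, ∑ j₃, ∑ k₁, ∑ k₂, ∑ k₃,
      levicivita ![i₁, i₂, i₃] * levicivita ![j₁, j₂, j₃] * levicivita ![k₁, k₂, k₃] *
        c * R i₂ j₁ * A i₃ k₁ * A j₃ k₂ * A j₂ k₃ = 0 := by
  have contract_k : ∀ i₂ i₃ j₁ j₂ j₃, ∑ k₁, ∑ k₂, ∑ k₃,
      levicivita ![i₁, i₂, i₃] * levicivita ![j₁, j₂, j₃] * levicivita ![k₁, k₂, k₃] *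
        c * R i₂ j₁ * A i₃ k₁ * A j₃ k₂ * A j₂ k₃ =
      levicivita ![i₁, i₂, i₃] * levicivita ![j₁, j₂, j₃] * c * R i₂ j₁ *
        (levicivita ![i₃, j₃, j₂] * A.det) := by
    intro i₂ i₃ j₁ j₂ j₃
    simp only [← sum_levicivita_mul_rows, mul_sum]
    exact sum_congr rfl fun _ _ => sum_congr rfl fun _ _ => sum_congr rfl fun _ _ => by ring
  have contract_j : ∀ i₂ i₃, ∑ j₁, ∑ j₂, ∑ j₃,
      levicivita ![i₁, i₂, i₃] * levicivita ![j₁, j₂, j₃] * c * R i₂ j₁ *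
        (levicivita ![i₃, j₃, j₂] * A.det) =
      -2 * c * A.det * (levicivita ![i₁, i₂, i₃] * R i₂ i₃) := by
    intro i₂ i₃
    have regroup : ∀ j₁ j₂ j₃, levicivita ![i₁, i₂, i₃] * levicivita ![j₁, j₂, j₃] * c * R i₂ j₁ *
        (levicivita ![i₃, j₃, j₂] * A.det) = -(levicivita ![i₁, i₂, i₃] * c * A.det * R i₂ j₁) *
          (levicivita ![j₁, j₂, j₃] * levicivita ![i₃, j₂, j₃]) := by
      intro j₁ j₂ j₃
      rw [levicivita_swap_two_three i₃ j₂ j₃]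
      ring
    simp only [regroup, ← mul_sum, sum_levicivita_mul_levicivita, mul_ite, mul_zero, sum_ite_eq',
      mem_univ, if_true]
    ring
  simp only [contract_k]
  simp only [contract_j, ← mul_sum, sum_levicivita_mul_of_isSymm R hR, mul_zero]

theorem pd2_comm {d : ℕ} {f : (Fin d → ℝ) → ℝ} (hf : ContDiff ℝ 2 f) (p q : Fin d)
    (x : Fin d → ℝ) : pd2 f p q x = pd2 f q p x := by
  have hdf : Differentiable ℝ (fderiv ℝ f) :=
    (hf.fderiv_right (m := 1) (by norm_num)).differentiable one_ne_zero
  have pd_fderiv : ∀ u v : Fin d → ℝ,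
      fderiv ℝ (fun y => fderiv ℝ f y v) x u = fderiv ℝ (fderiv ℝ f) x u v := by
    intro u v
    simp [fderiv_clm_apply (hdf x) (differentiableAt_const v)]
  have hsymm := hf.contDiffAt.isSymmSndFDerivAt (x := x)
    (by simp [minSmoothness_of_isRCLikeNormedField])
  unfold pd2 pd
  rw [pd_fderiv, pd_fderiv, hsymm.eq]

theorem sunflower_micrograph_no10_vanishes_3d_general
    (ρ a : (Fin 3 → ℝ) → ℝ) (hρ : ContDiff ℝ 2 ρ)
    (x : Fin 3 → ℝ) (i₁ : Fin 3) :
    ∑ i₂ : Fin 3, ∑ i₃ : Fin 3, ∑ j₁ : Fin 3, ∑ j₂ : Fin 3, ∑ j₃ : Fin 3,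
    ∑ k₁ : Fin 3, ∑ k₂ : Fin 3, ∑ k₃ : Fin 3,
      levicivita ![i₁, i₂, i₃] * levicivita ![j₁, j₂, j₃] * levicivita ![k₁, k₂, k₃] *
        ρ x ^ 2 * pd2 ρ i₂ j₁ x * pd2 a i₃ k₁ x * pd2 a j₃ k₂ x * pd2 a j₂ k₃ x = 0 :=
  sunflower_contraction_eq_zero_of_isSymm (of fun p q => pd2 ρ p q x) (of fun p q => pd2 a p q x)
    (IsSymm.ext fun p q => pd2_comm hρ q p x) (ρ x ^ 2) i₁

/-- The 1-vector field on ℝ³ encoded by the vanishing sunflower micro-graph with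
encoding (0,1,4; 1,6,5; 4,5,6), built of three copies of the 3D Nambu–Poisson
bracket `ρ·det(∂(f,g,a)/∂x)`, is identically zero. -/
theorem sunflower_micrograph_no10_vanishes_3d
    (ρ a : (Fin 3 → ℝ) → ℝ) (hρ : ContDiff ℝ 2 ρ) (ha : ContDiff ℝ 2 a)
    (x : Fin 3 → ℝ) (i₁ : Fin 3) :
    ∑ i₂ : Fin 3, ∑ i₃ : Fin 3, ∑ j₁ : Fin 3, ∑ j₂ : Fin 3, ∑ j₃ : Fin 3,
    ∑ k₁ : Fin 3, ∑ k₂ : Fin 3, ∑ k₃ : Fin 3,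
      levicivita ![i₁, i₂, i₃] * levicivita ![j₁, j₂, j₃] * levicivita ![k₁, k₂, k₃] *
        ρ x ^ 2 * pd2 ρ i₂ j₁ x * pd2 a i₃ k₁ x * pd2 a j₃ k₂ x * pd2 a j₂ k₃ x = 0 :=
  sunflower_micrograph_no10_vanishes_3d_general ρ a hρ x i₁
end
end

section
/- Let ρ, a¹, a² : ℝ⁴ → ℝ be smooth. Then for every point x ∈ ℝ⁴ and every fixed index i₁ ∈ {1,2,3,4}, the 'cross-term' part of the embedded micro-graph formula vanishes: the sum over all indices i₂,i₃,i₄,j₁,j₂,j₃,j₄,k₁,k₂,k₃,k₄ ∈ {1,2,3,4} SUBJECT TO the restriction that (i₄,j₄,k₄) ≠ (4,4,4), of ε^{i₁i₂i₃i₄}·ε^{j₁j₂j₃j₄}·ε^{k₁k₂k₃k₄}·ρ(x)²·ρ_{i₂j₁}(x)·a¹_{i₃k₁}(x)·a¹_{j₃k₂}(x)·a¹_{j₂k₃}(x)·a²_{i₄}(x)·a²_{j₄}(x)·a²_{k₄}(x), equals 0. -/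
noncomputable section

/-- Integer-valued Levi-Civita symbol on 4 indices (sign-product formula). -/
def eZ (a b c d : Fin 4) : ℤ :=
  Int.sign (((b:ℤ)-(a:ℤ))*((c:ℤ)-(a:ℤ))*((d:ℤ)-(a:ℤ))*((c:ℤ)-(b:ℤ))*((d:ℤ)-(b:ℤ))*((d:ℤ)-(c:ℤ)))

/-- Real-valued Levi-Civita symbol. -/
def ee (a b c d : Fin 4) : ℝ := ((eZ a b c d : ℤ) : ℝ)

lemma Z_swap12 : ∀ a b c d : Fin 4, eZ b a c d = -eZ a b c d := by decide
lemma Z_swap23 : ∀ a b c d : Fin 4, eZ a c b d = -eZ a b c d := by decide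
lemma Z_swap34 : ∀ a b c d : Fin 4, eZ a b d c = -eZ a b c d := by decide

lemma ee_swap12 (a b c d : Fin 4) : ee b a c d = -ee a b c d := by
  simp only [ee, Z_swap12 a b c d]; push_cast; ring
lemma ee_swap23 (a b c d : Fin 4) : ee a c b d = -ee a b c d := by
  simp only [ee, Z_swap23 a b c d]; push_cast; ring
lemma ee_swap34 (a b c d : Fin 4) : ee a b d c = -ee a b c d := by
  simp only [ee, Z_swap34 a b c d]; push_cast; ring

set_option maxHeartbeats 1000000 in
lemma Z_P3 : ∀ j q a m : Fin 4,
    (∑ x : Fin 4, ∑ y : Fin 4, eZ j x y q * eZ a y x m)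
      = -2 * ((if j = a then (1:ℤ) else 0) * (if q = m then (1:ℤ) else 0)
            - (if j = m then (1:ℤ) else 0) * (if q = a then (1:ℤ) else 0)) := by decide

lemma P3R (j q a m : Fin 4) :
    (∑ x : Fin 4, ∑ y : Fin 4, ee j x y q * ee a y x m)
      = -2 * ((if j = a then (1:ℝ) else 0) * (if q = m then (1:ℝ) else 0)
            - (if j = m then (1:ℝ) else 0) * (if q = a then (1:ℝ) else 0)) := by
  have h := Z_P3 j q a m
  have : ((∑ x : Fin 4, ∑ y : Fin 4, eZ j x y q * eZ a y x m : ℤ) : ℝ)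
      = -2 * ((if j = a then (1:ℝ) else 0) * (if q = m then (1:ℝ) else 0)
            - (if j = m then (1:ℝ) else 0) * (if q = a then (1:ℝ) else 0)) := by
    rw [h]; push_cast [apply_ite (Int.cast : ℤ → ℝ)]; ring
  rw [← this]; push_cast [ee]; ring

set_option maxHeartbeats 1000000 in
lemma Z_D3 : ∀ a b c u v w : Fin 4,
    (∑ m : Fin 4, eZ a b c m * eZ u v w m)
      = ((if a = u then (1:ℤ) else 0) * (if b = v then 1 else 0) * (if c = w then 1 else 0)
       - (if a = u then (1:ℤ) else 0) * (if b = w then 1 else 0) * (if c = v then 1 else 0)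
       - (if a = v then (1:ℤ) else 0) * (if b = u then 1 else 0) * (if c = w then 1 else 0)
       + (if a = v then (1:ℤ) else 0) * (if b = w then 1 else 0) * (if c = u then 1 else 0)
       + (if a = w then (1:ℤ) else 0) * (if b = u then 1 else 0) * (if c = v then 1 else 0)
       - (if a = w then (1:ℤ) else 0) * (if b = v then 1 else 0) * (if c = u then 1 else 0)) := by
  decide

lemma D3R (a b c u v w : Fin 4) :
    (∑ m : Fin 4, ee a b c m * ee u v w m)
      = ((if a = u then (1:ℝ) else 0) * (if b = v then 1 else 0) * (if c = w then 1 else 0)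
       - (if a = u then (1:ℝ) else 0) * (if b = w then 1 else 0) * (if c = v then 1 else 0)
       - (if a = v then (1:ℝ) else 0) * (if b = u then 1 else 0) * (if c = w then 1 else 0)
       + (if a = v then (1:ℝ) else 0) * (if b = w then 1 else 0) * (if c = u then 1 else 0)
       + (if a = w then (1:ℝ) else 0) * (if b = u then 1 else 0) * (if c = v then 1 else 0)
       - (if a = w then (1:ℝ) else 0) * (if b = v then 1 else 0) * (if c = u then 1 else 0)) := by
  have h := Z_D3 a b c u v w
  have : ((∑ m : Fin 4, eZ a b c m * eZ u v w m : ℤ) : ℝ)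
      = ((if a = u then (1:ℝ) else 0) * (if b = v then 1 else 0) * (if c = w then 1 else 0)
       - (if a = u then (1:ℝ) else 0) * (if b = w then 1 else 0) * (if c = v then 1 else 0)
       - (if a = v then (1:ℝ) else 0) * (if b = u then 1 else 0) * (if c = w then 1 else 0)
       + (if a = v then (1:ℝ) else 0) * (if b = w then 1 else 0) * (if c = u then 1 else 0)
       + (if a = w then (1:ℝ) else 0) * (if b = u then 1 else 0) * (if c = v then 1 else 0)
       - (if a = w then (1:ℝ) else 0) * (if b = v then 1 else 0) * (if c = u then 1 else 0)) := by
    rw [h]; push_cast [apply_ite (Int.cast : ℤ → ℝ)]; ring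
  rw [← this]; push_cast [ee]; ring


lemma lc_cast {d : ℕ} (m : Fin d → Fin d) :
    levicivita m = (((Matrix.of fun p q => if m p = q then (1:ℤ) else 0).det : ℤ) : ℝ) := by
  have h := RingHom.map_det (Int.castRingHom ℝ) (Matrix.of fun p q => if m p = q then (1:ℤ) else 0)
  rw [levicivita]
  rw [show ((((Matrix.of fun p q => if m p = q then (1:ℤ) else 0).det : ℤ) : ℝ))
      = (Int.castRingHom ℝ) (Matrix.of fun p q => if m p = q then (1:ℤ) else 0).det from rfl, h]
  congr 1
  ext p q
  simp [Matrix.map_apply, apply_ite (Int.cast : ℤ → ℝ)]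

set_option maxHeartbeats 1000000 in
lemma detZ_eq : ∀ a b c d : Fin 4,
    (Matrix.of fun p q => if ![a,b,c,d] p = q then (1:ℤ) else 0).det = eZ a b c d := by decide


lemma sum_comm4 (f : Fin 4 → Fin 4 → Fin 4 → Fin 4 → ℝ) :
    (∑ m : Fin 4, ∑ u : Fin 4, ∑ v : Fin 4, ∑ w : Fin 4, f m u v w)
      = ∑ u : Fin 4, ∑ v : Fin 4, ∑ w : Fin 4, ∑ m : Fin 4, f m u v w :=
  (Finset.sum_comm).trans (Finset.sum_congr rfl fun u _ =>
    (Finset.sum_comm).trans (Finset.sum_congr rfl fun v _ => Finset.sum_comm))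

lemma sum_comm3 (f : Fin 4 → Fin 4 → Fin 4 → ℝ) :
    (∑ m : Fin 4, ∑ v : Fin 4, ∑ w : Fin 4, f m v w)
      = ∑ v : Fin 4, ∑ w : Fin 4, ∑ m : Fin 4, f m v w :=
  (Finset.sum_comm).trans (Finset.sum_congr rfl fun v _ => Finset.sum_comm)

section KPart

variable (A : Fin 4 → Fin 4 → ℝ) (r : Fin 4)

/-- The contraction of the `k`-indices. -/
def Kf (a b c : Fin 4) : ℝ :=
  ∑ k₁ : Fin 4, ∑ k₂ : Fin 4, ∑ k₃ : Fin 4, ee k₁ k₂ k₃ r * A a k₁ * A b k₂ * A c k₃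

/-- Components of the alternating tensor `Kf`. -/
def gf (m : Fin 4) : ℝ :=
  (1/6) * ∑ u : Fin 4, ∑ v : Fin 4, ∑ w : Fin 4, ee u v w m * Kf A r u v w

lemma K_swap12 (a b c : Fin 4) : Kf A r b a c = -Kf A r a b c := by
  unfold Kf
  rw [Finset.sum_comm, ← Finset.sum_neg_distrib]
  refine Finset.sum_congr rfl fun k₁ _ => ?_
  rw [← Finset.sum_neg_distrib]
  refine Finset.sum_congr rfl fun k₂ _ => ?_
  rw [← Finset.sum_neg_distrib]
  refine Finset.sum_congr rfl fun k₃ _ => ?_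
  rw [ee_swap12]
  ring

lemma K_swap23 (a b c : Fin 4) : Kf A r a c b = -Kf A r a b c := by
  unfold Kf
  rw [← Finset.sum_neg_distrib]
  refine Finset.sum_congr rfl fun k₁ _ => ?_
  rw [Finset.sum_comm, ← Finset.sum_neg_distrib]
  refine Finset.sum_congr rfl fun k₂ _ => ?_
  rw [← Finset.sum_neg_distrib]
  refine Finset.sum_congr rfl fun k₃ _ => ?_
  rw [ee_swap23]
  ring

lemma K_alt (a b c : Fin 4) : Kf A r a b c = ∑ m : Fin 4, ee a b c m * gf A r m := by
  have step1 : ∑ m : Fin 4, ee a b c m * gf A r m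
      = (1/6) * ∑ u : Fin 4, ∑ v : Fin 4, ∑ w : Fin 4,
          (∑ m : Fin 4, ee a b c m * ee u v w m) * Kf A r u v w := by
    calc ∑ m : Fin 4, ee a b c m * gf A r m
        = ∑ m : Fin 4, ∑ u : Fin 4, ∑ v : Fin 4, ∑ w : Fin 4,
            (1/6) * (ee a b c m * ee u v w m * Kf A r u v w) := by
          refine Finset.sum_congr rfl fun m _ => ?_
          unfold gf
          rw [Finset.mul_sum, Finset.mul_sum]
          refine Finset.sum_congr rfl fun u _ => ?_
          rw [Finset.mul_sum, Finset.mul_sum]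
          refine Finset.sum_congr rfl fun v _ => ?_
          rw [Finset.mul_sum, Finset.mul_sum]
          exact Finset.sum_congr rfl fun w _ => by ring
      _ = ∑ u : Fin 4, ∑ v : Fin 4, ∑ w : Fin 4, ∑ m : Fin 4,
            (1/6) * (ee a b c m * ee u v w m * Kf A r u v w) := sum_comm4 _
      _ = (1/6) * ∑ u : Fin 4, ∑ v : Fin 4, ∑ w : Fin 4,
            (∑ m : Fin 4, ee a b c m * ee u v w m) * Kf A r u v w := by
          symm
          rw [Finset.mul_sum]
          refine Finset.sum_congr rfl fun u _ => ?_
          rw [Finset.mul_sum]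
          refine Finset.sum_congr rfl fun v _ => ?_
          rw [Finset.mul_sum]
          refine Finset.sum_congr rfl fun w _ => ?_
          rw [Finset.sum_mul, Finset.mul_sum]
  rw [step1]
  have step2 : ∀ u v w : Fin 4, (∑ m : Fin 4, ee a b c m * ee u v w m) * Kf A r u v w
      = ((if a = u then (1:ℝ) else 0) * (if b = v then 1 else 0) * (if c = w then 1 else 0)
       - (if a = u then (1:ℝ) else 0) * (if b = w then 1 else 0) * (if c = v then 1 else 0)
       - (if a = v then (1:ℝ) else 0) * (if b = u then 1 else 0) * (if c = w then 1 else 0)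
       + (if a = v then (1:ℝ) else 0) * (if b = w then 1 else 0) * (if c = u then 1 else 0)
       + (if a = w then (1:ℝ) else 0) * (if b = u then 1 else 0) * (if c = v then 1 else 0)
       - (if a = w then (1:ℝ) else 0) * (if b = v then 1 else 0) * (if c = u then 1 else 0))
        * Kf A r u v w := fun u v w => by rw [D3R]
  simp only [step2]
  have collapse : ∑ u : Fin 4, ∑ v : Fin 4, ∑ w : Fin 4,
      ((if a = u then (1:ℝ) else 0) * (if b = v then 1 else 0) * (if c = w then 1 else 0)
       - (if a = u then (1:ℝ) else 0) * (if b = w then 1 else 0) * (if c = v then 1 else 0)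
       - (if a = v then (1:ℝ) else 0) * (if b = u then 1 else 0) * (if c = w then 1 else 0)
       + (if a = v then (1:ℝ) else 0) * (if b = w then 1 else 0) * (if c = u then 1 else 0)
       + (if a = w then (1:ℝ) else 0) * (if b = u then 1 else 0) * (if c = v then 1 else 0)
       - (if a = w then (1:ℝ) else 0) * (if b = v then 1 else 0) * (if c = u then 1 else 0))
        * Kf A r u v w
      = Kf A r a b c - Kf A r a c b - Kf A r b a c + Kf A r b c a
        + Kf A r c a b - Kf A r c b a := by
    simp only [sub_mul, add_mul, ite_mul, zero_mul, one_mul, Finset.sum_sub_distrib,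
      Finset.sum_add_distrib, Finset.sum_ite_eq, Finset.mem_univ, if_true]
    ring_nf
    simp [Finset.sum_ite_eq]
    ring
  rw [collapse]
  have h1 : Kf A r a c b = -Kf A r a b c := K_swap23 A r a b c
  have h2 : Kf A r b a c = -Kf A r a b c := K_swap12 A r a b c
  have h3 : Kf A r b c a = Kf A r a b c := by rw [K_swap23, K_swap12]; ring
  have h4 : Kf A r c a b = Kf A r a b c := by rw [K_swap12, K_swap23]; ring
  have h5 : Kf A r c b a = -Kf A r a b c := by rw [K_swap23, K_swap12, K_swap23]; ring
  rw [h1, h2, h3, h4, h5]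
  ring

end KPart

section TPart

variable (S A : Fin 4 → Fin 4 → ℝ) (i₁ r : Fin 4)

/-- The full 8-index contraction appearing in the micro-graph formula. -/
def Tg (p q : Fin 4) : ℝ :=
  ∑ i₂ : Fin 4, ∑ i₃ : Fin 4, ∑ j₁ : Fin 4, ∑ j₂ : Fin 4, ∑ j₃ : Fin 4,
  ∑ k₁ : Fin 4, ∑ k₂ : Fin 4, ∑ k₃ : Fin 4,
    ee i₁ i₂ i₃ p * ee j₁ j₂ j₃ q * ee k₁ k₂ k₃ r *
      S i₂ j₁ * A i₃ k₁ * A j₃ k₂ * A j₂ k₃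

lemma Tg_eq_K (p q : Fin 4) : Tg S A i₁ r p q
    = ∑ i₂ : Fin 4, ∑ i₃ : Fin 4, ∑ j₁ : Fin 4, ∑ j₂ : Fin 4, ∑ j₃ : Fin 4,
        ee i₁ i₂ i₃ p * ee j₁ j₂ j₃ q * S i₂ j₁ * Kf A r i₃ j₃ j₂ := by
  unfold Tg
  refine Finset.sum_congr rfl fun i₂ _ => ?_
  refine Finset.sum_congr rfl fun i₃ _ => ?_
  refine Finset.sum_congr rfl fun j₁ _ => ?_
  refine Finset.sum_congr rfl fun j₂ _ => ?_
  refine Finset.sum_congr rfl fun j₃ _ => ?_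
  symm
  unfold Kf
  rw [Finset.mul_sum]
  refine Finset.sum_congr rfl fun k₁ _ => ?_
  rw [Finset.mul_sum]
  refine Finset.sum_congr rfl fun k₂ _ => ?_
  rw [Finset.mul_sum]
  exact Finset.sum_congr rfl fun k₃ _ => by ring

lemma Tg_eq_g (p q : Fin 4) : Tg S A i₁ r p q
    = ∑ i₂ : Fin 4, ∑ i₃ : Fin 4, ∑ j₁ : Fin 4,
        ee i₁ i₂ i₃ p * S i₂ j₁ *
          (∑ m : Fin 4, gf A r m *
            (∑ j₂ : Fin 4, ∑ j₃ : Fin 4, ee j₁ j₂ j₃ q * ee i₃ j₃ j₂ m)) := by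
  rw [Tg_eq_K]
  refine Finset.sum_congr rfl fun i₂ _ => ?_
  refine Finset.sum_congr rfl fun i₃ _ => ?_
  refine Finset.sum_congr rfl fun j₁ _ => ?_
  calc ∑ j₂ : Fin 4, ∑ j₃ : Fin 4, ee i₁ i₂ i₃ p * ee j₁ j₂ j₃ q * S i₂ j₁ * Kf A r i₃ j₃ j₂
      = ∑ j₂ : Fin 4, ∑ j₃ : Fin 4, ∑ m : Fin 4,
          ee i₁ i₂ i₃ p * S i₂ j₁ * (gf A r m * (ee j₁ j₂ j₃ q * ee i₃ j₃ j₂ m)) := by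
        refine Finset.sum_congr rfl fun j₂ _ => ?_
        refine Finset.sum_congr rfl fun j₃ _ => ?_
        rw [K_alt, Finset.mul_sum]
        exact Finset.sum_congr rfl fun m _ => by ring
    _ = ∑ m : Fin 4, ∑ j₂ : Fin 4, ∑ j₃ : Fin 4,
          ee i₁ i₂ i₃ p * S i₂ j₁ * (gf A r m * (ee j₁ j₂ j₃ q * ee i₃ j₃ j₂ m)) := by
        rw [← sum_comm3 (fun m j₂ j₃ => ee i₁ i₂ i₃ p * S i₂ j₁ *
          (gf A r m * (ee j₁ j₂ j₃ q * ee i₃ j₃ j₂ m)))]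
    _ = ee i₁ i₂ i₃ p * S i₂ j₁ *
          (∑ m : Fin 4, gf A r m *
            (∑ j₂ : Fin 4, ∑ j₃ : Fin 4, ee j₁ j₂ j₃ q * ee i₃ j₃ j₂ m)) := by
        simp only [Finset.mul_sum]
        try refine Finset.sum_congr rfl fun m _ => ?_
        try refine Finset.sum_congr rfl fun j₂ _ => ?_
        try refine Finset.sum_congr rfl fun j₃ _ => ?_
        try ring

lemma Tg_closed (p q : Fin 4) : Tg S A i₁ r p q
    = -2 * gf A r q * (∑ i₂ : Fin 4, ∑ i₃ : Fin 4, ee i₁ i₂ i₃ p * S i₂ i₃)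
      + 2 * ∑ i₂ : Fin 4, ∑ j₁ : Fin 4, ee i₁ i₂ q p * S i₂ j₁ * gf A r j₁ := by
  rw [Tg_eq_g]
  have inner_eq : ∀ i₃ j₁ : Fin 4,
      (∑ m : Fin 4, gf A r m *
          (∑ j₂ : Fin 4, ∑ j₃ : Fin 4, ee j₁ j₂ j₃ q * ee i₃ j₃ j₂ m))
        = -2 * (if j₁ = i₃ then (1:ℝ) else 0) * gf A r q
          + 2 * (if q = i₃ then (1:ℝ) else 0) * gf A r j₁ := by
    intro i₃ j₁
    have hP : ∀ m : Fin 4, (∑ j₂ : Fin 4, ∑ j₃ : Fin 4, ee j₁ j₂ j₃ q * ee i₃ j₃ j₂ m)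
        = -2 * ((if j₁ = i₃ then (1:ℝ) else 0) * (if q = m then (1:ℝ) else 0)
              - (if j₁ = m then (1:ℝ) else 0) * (if q = i₃ then (1:ℝ) else 0)) :=
      fun m => P3R j₁ q i₃ m
    simp only [hP]
    have hsummand : ∀ m : Fin 4,
        gf A r m * (-2 * ((if j₁ = i₃ then (1:ℝ) else 0) * (if q = m then (1:ℝ) else 0)
              - (if j₁ = m then (1:ℝ) else 0) * (if q = i₃ then (1:ℝ) else 0)))
          = (-2 * (if j₁ = i₃ then (1:ℝ) else 0)) * (if q = m then gf A r m else 0)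
            + (2 * (if q = i₃ then (1:ℝ) else 0)) * (if j₁ = m then gf A r m else 0) := by
      intro m
      by_cases h1 : q = m <;> by_cases h2 : j₁ = m <;> by_cases h3 : j₁ = i₃ <;>
        by_cases h4 : q = i₃ <;> simp_all <;> try ring
    simp only [hsummand]
    rw [Finset.sum_add_distrib, ← Finset.mul_sum, ← Finset.mul_sum,
      Finset.sum_ite_eq, Finset.sum_ite_eq]
    simp only [Finset.mem_univ, if_true]
    try ring
  simp only [inner_eq]
  have expand : ∀ i₂ i₃ j₁ : Fin 4,
      ee i₁ i₂ i₃ p * S i₂ j₁ *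
        (-2 * (if j₁ = i₃ then (1:ℝ) else 0) * gf A r q
          + 2 * (if q = i₃ then (1:ℝ) else 0) * gf A r j₁)
      = (if j₁ = i₃ then ee i₁ i₂ i₃ p * S i₂ j₁ * (-2 * gf A r q) else 0)
        + (if q = i₃ then (1:ℝ) else 0) * (ee i₁ i₂ i₃ p * S i₂ j₁ * (2 * gf A r j₁)) := by
    intro i₂ i₃ j₁
    by_cases h1 : j₁ = i₃ <;> by_cases h2 : q = i₃ <;> simp [h1, h2] <;> ring
  simp only [expand]
  rw [show (∑ i₂ : Fin 4, ∑ i₃ : Fin 4, ∑ j₁ : Fin 4,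
      ((if j₁ = i₃ then ee i₁ i₂ i₃ p * S i₂ j₁ * (-2 * gf A r q) else 0)
        + (if q = i₃ then (1:ℝ) else 0) * (ee i₁ i₂ i₃ p * S i₂ j₁ * (2 * gf A r j₁))))
    = (∑ i₂ : Fin 4, ∑ i₃ : Fin 4, ∑ j₁ : Fin 4,
        (if j₁ = i₃ then ee i₁ i₂ i₃ p * S i₂ j₁ * (-2 * gf A r q) else 0))
      + (∑ i₂ : Fin 4, ∑ i₃ : Fin 4, ∑ j₁ : Fin 4,
        (if q = i₃ then (1:ℝ) else 0) * (ee i₁ i₂ i₃ p * S i₂ j₁ * (2 * gf A r j₁))) from by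
    simp [Finset.sum_add_distrib]]
  congr 1
  · -- collapse j₁ = i₃
    rw [show (∑ i₂ : Fin 4, ∑ i₃ : Fin 4, ∑ j₁ : Fin 4,
        (if j₁ = i₃ then ee i₁ i₂ i₃ p * S i₂ j₁ * (-2 * gf A r q) else 0))
      = ∑ i₂ : Fin 4, ∑ i₃ : Fin 4, ee i₁ i₂ i₃ p * S i₂ i₃ * (-2 * gf A r q) from by
      refine Finset.sum_congr rfl fun i₂ _ => Finset.sum_congr rfl fun i₃ _ => ?_
      rw [Finset.sum_ite_eq']
      simp]
    rw [Finset.mul_sum]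
    refine Finset.sum_congr rfl fun i₂ _ => ?_
    rw [Finset.mul_sum]
    exact Finset.sum_congr rfl fun i₃ _ => by ring
  · -- collapse i₃ = q
    rw [show (∑ i₂ : Fin 4, ∑ i₃ : Fin 4, ∑ j₁ : Fin 4,
        (if q = i₃ then (1:ℝ) else 0) * (ee i₁ i₂ i₃ p * S i₂ j₁ * (2 * gf A r j₁)))
      = ∑ i₂ : Fin 4, ∑ j₁ : Fin 4, ee i₁ i₂ q p * S i₂ j₁ * (2 * gf A r j₁) from by
      refine Finset.sum_congr rfl fun i₂ _ => ?_
      rw [show (∑ i₃ : Fin 4, ∑ j₁ : Fin 4,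
          (if q = i₃ then (1:ℝ) else 0) * (ee i₁ i₂ i₃ p * S i₂ j₁ * (2 * gf A r j₁)))
        = ∑ i₃ : Fin 4, (if q = i₃ then
            (∑ j₁ : Fin 4, ee i₁ i₂ i₃ p * S i₂ j₁ * (2 * gf A r j₁)) else 0) from by
        refine Finset.sum_congr rfl fun i₃ _ => ?_
        by_cases h : q = i₃ <;> simp [h]]
      rw [Finset.sum_ite_eq]
      simp]
    rw [Finset.mul_sum]
    refine Finset.sum_congr rfl fun i₂ _ => ?_
    rw [Finset.mul_sum]
    exact Finset.sum_congr rfl fun j₁ _ => by ring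

lemma P4 (hS : ∀ a b, S a b = S b a) (p : Fin 4) :
    (∑ i₂ : Fin 4, ∑ i₃ : Fin 4, ee i₁ i₂ i₃ p * S i₂ i₃) = 0 := by
  have h : (∑ i₂ : Fin 4, ∑ i₃ : Fin 4, ee i₁ i₂ i₃ p * S i₂ i₃)
      = -(∑ i₂ : Fin 4, ∑ i₃ : Fin 4, ee i₁ i₂ i₃ p * S i₂ i₃) := by
    nth_rewrite 1 [Finset.sum_comm]
    rw [← Finset.sum_neg_distrib]
    refine Finset.sum_congr rfl fun i₂ _ => ?_
    rw [← Finset.sum_neg_distrib]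
    refine Finset.sum_congr rfl fun i₃ _ => ?_
    rw [ee_swap23, hS i₃ i₂]
    ring
  linarith

lemma Tg_antisym (hS : ∀ a b, S a b = S b a) (p q : Fin 4) :
    Tg S A i₁ r p q + Tg S A i₁ r q p = 0 := by
  rw [Tg_closed, Tg_closed, P4 S i₁ hS, P4 S i₁ hS]
  have hz : ∑ i₂ : Fin 4, ∑ j₁ : Fin 4,
      (ee i₁ i₂ q p * S i₂ j₁ * gf A r j₁ + ee i₁ i₂ p q * S i₂ j₁ * gf A r j₁) = 0 :=
    Finset.sum_eq_zero fun i₂ _ => Finset.sum_eq_zero fun j₁ _ => by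
      rw [ee_swap34 i₁ i₂ q p]; ring
  have hsplit : ∑ i₂ : Fin 4, ∑ j₁ : Fin 4,
      (ee i₁ i₂ q p * S i₂ j₁ * gf A r j₁ + ee i₁ i₂ p q * S i₂ j₁ * gf A r j₁)
    = (∑ i₂ : Fin 4, ∑ j₁ : Fin 4, ee i₁ i₂ q p * S i₂ j₁ * gf A r j₁)
      + (∑ i₂ : Fin 4, ∑ j₁ : Fin 4, ee i₁ i₂ p q * S i₂ j₁ * gf A r j₁) := by
    simp [Finset.sum_add_distrib]
  rw [hz] at hsplit
  nlinarith [hsplit]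

end TPart

lemma lc_ee (a b c d : Fin 4) : levicivita ![a,b,c,d] = ee a b c d := by
  rw [lc_cast, detZ_eq]; rfl

lemma pd2_symm {d : ℕ} (f : (Fin d → ℝ) → ℝ) (hf : ContDiff ℝ (⊤ : ℕ∞) f) (p q : Fin d)
    (x : Fin d → ℝ) : pd2 f p q x = pd2 f q p x := by
  have hsymm : IsSymmSndFDerivAt ℝ f x :=
    hf.contDiffAt.isSymmSndFDerivAt (by rw [minSmoothness_of_isRCLikeNormedField]; exact WithTop.coe_le_coe.mpr le_top)
  have hdiff : DifferentiableAt ℝ (fderiv ℝ f) x := by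
    have : ContDiff ℝ 1 (fderiv ℝ f) := hf.fderiv_right (WithTop.coe_le_coe.mpr le_top)
    exact this.differentiable one_ne_zero x
  have h1 : ∀ (a b : Fin d), pd2 f a b x
      = fderiv ℝ (fderiv ℝ f) x (Pi.single a 1) (Pi.single b 1) := by
    intro a b
    unfold pd2 pd
    rw [fderiv_clm_apply (c := fderiv ℝ f) (u := fun _ => Pi.single b (1:ℝ)) (x := x)
      hdiff (differentiableAt_const _)]
    simp
  rw [h1, h1, hsymm.eq]


/-- The cross-term part of the embedded micro-graph formula vanishes: the sum is
restricted to those triples of new-edge indices `(i₄, j₄, k₄)` which are not all equal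
to the new index `4` (represented by `3 : Fin 4` since `Fin 4 = {0,1,2,3}` encodes the
coordinate labels `{1,2,3,4}`). -/
theorem sunflower_micrograph_no10_cross_terms_vanish_4d
    (ρ a1 a2 : (Fin 4 → ℝ) → ℝ)
    (hρ : ContDiff ℝ (⊤ : ℕ∞) ρ) (ha1 : ContDiff ℝ (⊤ : ℕ∞) a1) (ha2 : ContDiff ℝ (⊤ : ℕ∞) a2)
    (x : Fin 4 → ℝ) (i₁ : Fin 4) :
    ∑ t ∈ Finset.univ.filter
        (fun t : Fin 4 × Fin 4 × Fin 4 => t ≠ ((3 : Fin 4), (3 : Fin 4), (3 : Fin 4))),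
    ∑ i₂ : Fin 4, ∑ i₃ : Fin 4,
    ∑ j₁ : Fin 4, ∑ j₂ : Fin 4, ∑ j₃ : Fin 4,
    ∑ k₁ : Fin 4, ∑ k₂ : Fin 4, ∑ k₃ : Fin 4,
      levicivita ![i₁, i₂, i₃, t.1] * levicivita ![j₁, j₂, j₃, t.2.1] *
        levicivita ![k₁, k₂, k₃, t.2.2] *
        ρ x ^ 2 * pd2 ρ i₂ j₁ x * pd2 a1 i₃ k₁ x * pd2 a1 j₃ k₂ x * pd2 a1 j₂ k₃ x *
        pd a2 t.1 x * pd a2 t.2.1 x * pd a2 t.2.2 x = 0 := by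
  classical
  have hS : ∀ a b, pd2 ρ a b x = pd2 ρ b a x := fun a b => pd2_symm ρ hρ a b x
  have FACT : ∀ p q r : Fin 4,
      (∑ i₂ : Fin 4, ∑ i₃ : Fin 4,
       ∑ j₁ : Fin 4, ∑ j₂ : Fin 4, ∑ j₃ : Fin 4,
       ∑ k₁ : Fin 4, ∑ k₂ : Fin 4, ∑ k₃ : Fin 4,
        levicivita ![i₁, i₂, i₃, p] * levicivita ![j₁, j₂, j₃, q] *
          levicivita ![k₁, k₂, k₃, r] *
          ρ x ^ 2 * pd2 ρ i₂ j₁ x * pd2 a1 i₃ k₁ x * pd2 a1 j₃ k₂ x * pd2 a1 j₂ k₃ x *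
          pd a2 p x * pd a2 q x * pd a2 r x)
      = (ρ x ^ 2 * pd a2 p x * pd a2 q x * pd a2 r x) *
          Tg (fun a b => pd2 ρ a b x) (fun a b => pd2 a1 a b x) i₁ r p q := by
    intro p q r
    unfold Tg
    simp only [Finset.mul_sum]
    refine Finset.sum_congr rfl fun i₂ _ => ?_
    refine Finset.sum_congr rfl fun i₃ _ => ?_
    refine Finset.sum_congr rfl fun j₁ _ => ?_
    refine Finset.sum_congr rfl fun j₂ _ => ?_
    refine Finset.sum_congr rfl fun j₃ _ => ?_
    refine Finset.sum_congr rfl fun k₁ _ => ?_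
    refine Finset.sum_congr rfl fun k₂ _ => ?_
    refine Finset.sum_congr rfl fun k₃ _ => ?_
    rw [lc_ee, lc_ee, lc_ee]
    ring
  have hkey : ∀ p q r : Fin 4,
      (∑ i₂ : Fin 4, ∑ i₃ : Fin 4,
       ∑ j₁ : Fin 4, ∑ j₂ : Fin 4, ∑ j₃ : Fin 4,
       ∑ k₁ : Fin 4, ∑ k₂ : Fin 4, ∑ k₃ : Fin 4,
        levicivita ![i₁, i₂, i₃, p] * levicivita ![j₁, j₂, j₃, q] *
          levicivita ![k₁, k₂, k₃, r] *
          ρ x ^ 2 * pd2 ρ i₂ j₁ x * pd2 a1 i₃ k₁ x * pd2 a1 j₃ k₂ x * pd2 a1 j₂ k₃ x *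
          pd a2 p x * pd a2 q x * pd a2 r x)
      + (∑ i₂ : Fin 4, ∑ i₃ : Fin 4,
       ∑ j₁ : Fin 4, ∑ j₂ : Fin 4, ∑ j₃ : Fin 4,
       ∑ k₁ : Fin 4, ∑ k₂ : Fin 4, ∑ k₃ : Fin 4,
        levicivita ![i₁, i₂, i₃, q] * levicivita ![j₁, j₂, j₃, p] *
          levicivita ![k₁, k₂, k₃, r] *
          ρ x ^ 2 * pd2 ρ i₂ j₁ x * pd2 a1 i₃ k₁ x * pd2 a1 j₃ k₂ x * pd2 a1 j₂ k₃ x *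
          pd a2 q x * pd a2 p x * pd a2 r x) = 0 := by
    intro p q r
    rw [FACT p q r, FACT q p r]
    have h := Tg_antisym (fun a b => pd2 ρ a b x) (fun a b => pd2 a1 a b x) i₁ r hS p q
    linear_combination (ρ x ^ 2 * pd a2 p x * pd a2 q x * pd a2 r x) * h
  refine Finset.sum_involution (fun t _ => (t.2.1, t.1, t.2.2)) ?_ ?_ ?_ ?_
  · rintro ⟨p, q, r⟩ ht
    exact hkey p q r
  · rintro ⟨p, q, r⟩ ht h0 heq
    have hqp : q = p := congrArg Prod.fst heq
    subst hqp
    exact h0 (by linarith [hkey q q r])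
  · rintro ⟨p, q, r⟩ ht
    simp only [Finset.mem_filter, Finset.mem_univ, true_and] at ht ⊢
    simp only [ne_eq, Prod.mk.injEq] at ht ⊢
    tauto
  · rintro ⟨p, q, r⟩ ht
    rfl
end
end

section
/- Let ρ, a¹, a² : ℝ⁴ → ℝ be smooth. Then for every point x ∈ ℝ⁴, the sum over all indices i₁,i₂,i₃,i₄,j₁,j₂,j₃,j₄ ∈ {1,2,3,4} of ε^{i₁i₂i₃i₄}·ε^{j₁j₂j₃j₄}·ρ_{i₁}(x)·ρ_{i₂}(x)·a¹_{i₃j₁}(x)·a¹_{j₂}(x)·a²_{i₄j₃}(x)·a²_{j₄}(x) equals 0. (This is the vanishing, as a scalar function, of the Hamiltonian micro-graph H⁽⁹⁾ over ℝ⁴ with encoding [1,2,3,5; 3,4,5,6], built of two copies of the 4D Nambu–Poisson bracket with Casimirs a¹, a²: it is the only vanishing Hamiltonian for (m,n) = (0,2) in dimension 4.) -/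
noncomputable section

lemma lc_swap (a b c d : Fin 4) : levicivita ![b,a,c,d] = - levicivita ![a,b,c,d] := by
  unfold levicivita
  have h : (Matrix.of fun p q => if ![b,a,c,d] p = q then (1:ℝ) else 0)
      = (Matrix.of fun p q => if ![a,b,c,d] p = q then (1:ℝ) else 0).submatrix
        (Equiv.swap (0:Fin 4) 1) id := by
    ext p q
    fin_cases p <;> simp [Matrix.submatrix, Equiv.swap_apply_of_ne_of_ne] <;> congr
  rw [h, Matrix.det_permute]
  simp

lemma antisym_sum_zero (f : Fin 4 → Fin 4 → ℝ) (hf : ∀ i j, f i j = - f j i) :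
    (∑ i, ∑ j, f i j) = 0 := by
  have h1 : (∑ i : Fin 4, ∑ j : Fin 4, f i j) = - ∑ i : Fin 4, ∑ j : Fin 4, f i j := by
    calc (∑ i : Fin 4, ∑ j : Fin 4, f i j) = ∑ i : Fin 4, ∑ j : Fin 4, - f j i := by
          simp_rw [← hf]
      _ = - ∑ j : Fin 4, ∑ i : Fin 4, f j i := by
          rw [← Finset.sum_neg_distrib]
          simp_rw [← Finset.sum_neg_distrib]
          rw [Finset.sum_comm]
  linarith

/-- Vanishing, as a scalar function, of the Hamiltonian micro-graph `H⁽⁹⁾` over ℝ⁴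
with encoding [1,2,3,5; 3,4,5,6], built of two copies of the 4D Nambu–Poisson bracket
with Casimirs `a¹`, `a²`. -/
theorem hamiltonian_micrograph_H9_vanishes_4d
    (ρ a1 a2 : (Fin 4 → ℝ) → ℝ)
    (hρ : ContDiff ℝ (⊤ : ℕ∞) ρ) (ha1 : ContDiff ℝ (⊤ : ℕ∞) a1) (ha2 : ContDiff ℝ (⊤ : ℕ∞) a2)
    (x : Fin 4 → ℝ) :
    ∑ i₁ : Fin 4, ∑ i₂ : Fin 4, ∑ i₃ : Fin 4, ∑ i₄ : Fin 4,
    ∑ j₁ : Fin 4, ∑ j₂ : Fin 4, ∑ j₃ : Fin 4, ∑ j₄ : Fin 4,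
      levicivita ![i₁, i₂, i₃, i₄] * levicivita ![j₁, j₂, j₃, j₄] *
        pd ρ i₁ x * pd ρ i₂ x * pd2 a1 i₃ j₁ x * pd a1 j₂ x *
        pd2 a2 i₄ j₃ x * pd a2 j₄ x = 0 := by
  apply antisym_sum_zero
  intro i j
  simp only [← Finset.sum_neg_distrib]
  refine Finset.sum_congr rfl fun i₃ _ => Finset.sum_congr rfl fun i₄ _ =>
    Finset.sum_congr rfl fun j₁ _ => Finset.sum_congr rfl fun j₂ _ =>
    Finset.sum_congr rfl fun j₃ _ => Finset.sum_congr rfl fun j₄ _ => ?_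
  rw [lc_swap j i i₃ i₄]
  ring
end
end

section
/- Let ρ, a : ℝ³ → ℝ be smooth, and for smooth f, g : ℝ³ → ℝ define {f,g}(x) = ρ(x)·det J(x), where J(x) is the 3×3 matrix whose rows are the gradients at x of f, g, a. Then the bracket satisfies the Jacobi identity: for all smooth f, g, h : ℝ³ → ℝ and all x ∈ ℝ³, {{f,g},h}(x) + {{g,h},f}(x) + {{h,f},g}(x) = 0; i.e., the Nambu-determinant bracket on ℝ³ is a Poisson bracket. -/
noncomputable section

/-- The Nambu-determinant bracket on ℝ³ with coefficient `ρ` and Casimir `a`: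
`{f,g}(x) = ρ(x) · det J(x)`, where the rows of `J(x)` are the gradients at `x`
of `f`, `g`, `a`. -/
def nambu3 (ρ a f g : (Fin 3 → ℝ) → ℝ) (x : Fin 3 → ℝ) : ℝ :=
  ρ x * Matrix.det !![pd f 0 x, pd f 1 x, pd f 2 x;
                      pd g 0 x, pd g 1 x, pd g 2 x;
                      pd a 0 x, pd a 1 x, pd a 2 x]

lemma contDiff_pd {d : ℕ} {f : (Fin d → ℝ) → ℝ} (hf : ContDiff ℝ (⊤ : ℕ∞) f) (i : Fin d) :
    ContDiff ℝ (⊤ : ℕ∞) (pd f i) :=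
  (hf.fderiv_right (by simp)).clm_apply contDiff_const

lemma pd_mul {d : ℕ} {u v : (Fin d → ℝ) → ℝ} {x : Fin d → ℝ}
    (hu : DifferentiableAt ℝ u x) (hv : DifferentiableAt ℝ v x) (i : Fin d) :
    pd (fun y => u y * v y) i x = pd u i x * v x + u x * pd v i x := by
  unfold pd; rw [fderiv_fun_mul hu hv]; simp; ring

lemma pd_add {d : ℕ} {u v : (Fin d → ℝ) → ℝ} {x : Fin d → ℝ}
    (hu : DifferentiableAt ℝ u x) (hv : DifferentiableAt ℝ v x) (i : Fin d) :
    pd (fun y => u y + v y) i x = pd u i x + pd v i x := by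
  unfold pd; rw [fderiv_fun_add hu hv]; simp

lemma pd_sub {d : ℕ} {u v : (Fin d → ℝ) → ℝ} {x : Fin d → ℝ}
    (hu : DifferentiableAt ℝ u x) (hv : DifferentiableAt ℝ v x) (i : Fin d) :
    pd (fun y => u y - v y) i x = pd u i x - pd v i x := by
  unfold pd; rw [fderiv_fun_sub hu hv]; simp

/-- Clairaut/Schwarz: symmetry of second partial derivatives for smooth functions. -/
lemma pd_symm {d : ℕ} {f : (Fin d → ℝ) → ℝ} (hf : ContDiff ℝ (⊤ : ℕ∞) f) (i j : Fin d) (x : Fin d → ℝ) :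
    pd (pd f i) j x = pd (pd f j) i x := by
  have hd : DifferentiableAt ℝ (fderiv ℝ f) x :=
    ((hf.fderiv_right (m := (⊤ : ℕ∞)) (by simp)).differentiable (by simp)).differentiableAt
  have key : ∀ k l : Fin d, pd (pd f k) l x
      = fderiv ℝ (fderiv ℝ f) x (Pi.single l 1) (Pi.single k 1) := by
    intro k l
    unfold pd
    rw [fderiv_clm_apply hd (differentiableAt_const _)]
    simp
  rw [key, key]
  exact (hf.contDiffAt.isSymmSndFDerivAt (by norm_num; exact WithTop.coe_le_coe.mpr (le_top : (2 : ℕ∞) ≤ ⊤))).eq _ _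

/-- Explicit polynomial form of the Nambu bracket. -/
lemma nambu3_eq (ρ a f g : (Fin 3 → ℝ) → ℝ) :
    nambu3 ρ a f g = fun y =>
      ρ y * (pd f 0 y * (pd g 1 y * pd a 2 y) - pd f 0 y * (pd g 2 y * pd a 1 y)
        - pd f 1 y * (pd g 0 y * pd a 2 y) + pd f 1 y * (pd g 2 y * pd a 0 y)
        + pd f 2 y * (pd g 0 y * pd a 1 y) - pd f 2 y * (pd g 1 y * pd a 0 y)) := by
  funext y
  unfold nambu3
  congr 1
  simp [Matrix.det_fin_three]
  ring

set_option maxHeartbeats 4000000 in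
/-- The Nambu-determinant bracket on ℝ³ satisfies the Jacobi identity, i.e. it is a
Poisson bracket. -/
theorem nambu3_jacobi (ρ a : (Fin 3 → ℝ) → ℝ)
    (hρ : ContDiff ℝ (⊤ : ℕ∞) ρ) (ha : ContDiff ℝ (⊤ : ℕ∞) a)
    (f g h : (Fin 3 → ℝ) → ℝ)
    (hf : ContDiff ℝ (⊤ : ℕ∞) f) (hg : ContDiff ℝ (⊤ : ℕ∞) g) (hh : ContDiff ℝ (⊤ : ℕ∞) h)
    (x : Fin 3 → ℝ) :
    nambu3 ρ a (nambu3 ρ a f g) h x + nambu3 ρ a (nambu3 ρ a g h) f x +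
      nambu3 ρ a (nambu3 ρ a h f) g x = 0 := by
  have Hρ : Differentiable ℝ ρ := hρ.differentiable (by simp)
  have Hf : ∀ i, Differentiable ℝ (pd f i) := fun i => (contDiff_pd hf i).differentiable (by simp)
  have Hg : ∀ i, Differentiable ℝ (pd g i) := fun i => (contDiff_pd hg i).differentiable (by simp)
  have Hh : ∀ i, Differentiable ℝ (pd h i) := fun i => (contDiff_pd hh i).differentiable (by simp)
  have Ha : ∀ i, Differentiable ℝ (pd a i) := fun i => (contDiff_pd ha i).differentiable (by simp)
  simp only [nambu3_eq]
  simp (disch := fun_prop) only [pd_mul, pd_sub, pd_add]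
  simp only [pd_symm hf 1 0 x, pd_symm hf 2 0 x, pd_symm hf 2 1 x,
             pd_symm hg 1 0 x, pd_symm hg 2 0 x, pd_symm hg 2 1 x,
             pd_symm hh 1 0 x, pd_symm hh 2 0 x, pd_symm hh 2 1 x,
             pd_symm ha 1 0 x, pd_symm ha 2 0 x, pd_symm ha 2 1 x]
  ring
end
end
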